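/- arXiv:1910.09322 — 3 statements merged into one kernel-verified Lean document; each statement's English description precedes it below -/
import Mathlib

section
/- Greedy decomposition bound. Let h : S×A → ℝ be arbitrary and let π' be a policy greedy with respect to h (π' ∈ 𝒢(h)). Then, componentwise, q_* − q_{π'} ≤ (I − γP_{π_*})^{-1} (T_{π'} h − h) − (I − γP_{π'})^{-1} (T_{π'} h − h). -/
open Finset MeasureTheory
open scoped MeasureTheory

noncomputable section

namespace MoVIFormal

variable {S A : Type} [Fintype S] [Fintype A] [Nonempty S] [Nonempty A]
  [DecidableEq S] [DecidableEq A]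

/-- `P` is a transition kernel: `P sa s'` is the probability of moving to `s'` from
state-action pair `sa`. -/
def IsKernel (P : S × A → S → ℝ) : Prop :=
  (∀ sa s', 0 ≤ P sa s') ∧ ∀ sa, ∑ s', P sa s' = 1

/-- The operator `P_π` acting on `q`-functions. -/
def Pop (P : S × A → S → ℝ) (π : S → A) (q : S × A → ℝ) : S × A → ℝ :=
  fun sa => ∑ s', P sa s' * q (s', π s')

/-- The Bellman evaluation operator `T_π q = r + γ P_π q`. -/
def Tpol (P : S × A → S → ℝ) (r : S × A → ℝ) (γ : ℝ) (π : S → A) (q : S × A → ℝ) :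
    S × A → ℝ :=
  fun sa => r sa + γ * Pop P π q sa

/-- The Bellman optimality operator `T_*`. -/
def Topt (P : S × A → S → ℝ) (r : S × A → ℝ) (γ : ℝ) (q : S × A → ℝ) : S × A → ℝ :=
  fun sa => r sa + γ * ∑ s', P sa s' * (⨆ a', q (s', a'))

/-- `π` is greedy with respect to `q`: `T_π q = T_* q`. -/
def Greedy (P : S × A → S → ℝ) (r : S × A → ℝ) (γ : ℝ) (π : S → A) (q : S × A → ℝ) :
    Prop :=
  Tpol P r γ π q = Topt P r γ q

/-- The stochastic matrix of the operator `P_π`, so that `P_π q = (Pmat P π).mulVec q`. -/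
def Pmat (P : S × A → S → ℝ) (π : S → A) : Matrix (S × A) (S × A) ℝ :=
  fun sa sa' => if sa'.2 = π sa'.1 then P sa sa'.1 else 0

/-- The resolvent matrix `(I - γ P_π)⁻¹`. -/
def Res (P : S × A → S → ℝ) (γ : ℝ) (π : S → A) : Matrix (S × A) (S × A) ℝ :=
  (1 - γ • Pmat P π)⁻¹

/-- The composed kernels `P_{j:i} = P_{π_j} P_{π_{j-1}} ⋯ P_{π_i}` for `i ≤ j`,
and the identity otherwise. -/
def Pcomp (P : S × A → S → ℝ) (π : ℕ → S → A) (j i : ℕ) : Matrix (S × A) (S × A) ℝ :=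
  (((List.range' i (j + 1 - i)).reverse).map fun t => Pmat P (π t)).prod

/-- The MoVI iterates: `π (k+1)` is greedy w.r.t. `h k`,
`q (k+1) = T_{π (k+1)} (q k) + ε (k+1)` and `h k` is the running average of `q 0, …, q k`. -/
def IsMoVI (P : S × A → S → ℝ) (r : S × A → ℝ) (γ : ℝ)
    (π : ℕ → S → A) (q h : ℕ → S × A → ℝ) (ε : ℕ → S × A → ℝ) : Prop :=
  h 0 = q 0 ∧
  (∀ k : ℕ, Greedy P r γ (π (k + 1)) (h k)) ∧
  (∀ k : ℕ, q (k + 1) = fun sa => Tpol P r γ (π (k + 1)) (q k) sa + ε (k + 1) sa) ∧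
  (∀ k : ℕ, h (k + 1) = fun sa => ((k + 1 : ℝ) * h k sa + q (k + 1) sa) / (k + 2))

/-- The negative cumulative error `E_k = -∑_{j=1}^k ε_j`. -/
def Ecum (ε : ℕ → S × A → ℝ) (k : ℕ) : S × A → ℝ :=
  fun sa => -(∑ j ∈ Finset.Icc 1 k, ε j sa)

/-- The weighted negative cumulative error
`E'_{k,j} = -∑_{i=1}^{k-j} P_{i+j:i+1} (I - γ P_{π_i}) ε_i`. -/
def Ew (P : S × A → S → ℝ) (γ : ℝ) (π : ℕ → S → A) (ε : ℕ → S × A → ℝ)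
    (k j : ℕ) : S × A → ℝ :=
  fun sa =>
    -(∑ i ∈ Finset.Icc 1 (k - j),
        (Pcomp P π (i + j) (i + 1)).mulVec ((1 - γ • Pmat P (π i)).mulVec (ε i)) sa)

/-- Supremum norm of a `q`-function. -/
def supNorm (q : S × A → ℝ) : ℝ := ⨆ sa : S × A, |q sa|

/-- `μ`-weighted `ℓ1`-norm of a `q`-function. -/
def l1Norm (μ : S × A → ℝ) (q : S × A → ℝ) : ℝ := ∑ sa, μ sa * |q sa|

/-- `μ` is a probability distribution on `S × A`. -/
def IsDist (μ : S × A → ℝ) : Prop :=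
  (∀ sa, 0 ≤ μ sa) ∧ ∑ sa, μ sa = 1

/-- The discounted cumulative occupancy measure `d_{π,μ} = (1-γ) μ (I - γ P_π)⁻¹`. -/
def docc (P : S × A → S → ℝ) (γ : ℝ) (μ : S × A → ℝ) (π : S → A) : S × A → ℝ :=
  (1 - γ) • Matrix.vecMul μ (Res P γ π)

/-- Operator norm induced by the supremum norm (maximum absolute row sum). -/
def opNormInf (M : Matrix (S × A) (S × A) ℝ) : ℝ :=
  ⨆ sa : S × A, ∑ sa', |M sa sa'|

end MoVIFormal

/-!
Whatever the policy `π`, a fixed point `q_π` of `T_π` satisfies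
`q_π - h = γ P_π (q_π - h) + (T_π h - h)`, i.e. `q_π - h = (I - γ P_π)⁻¹ (T_π h - h)`.
For `π'` this is an identity. For `π_*` use `T_{π_*} h ≤ T_* h = T_{π'} h` together with the
monotonicity of `(I - γ P_{π_*})⁻¹`, which follows from the minimum principle for the stochastic
matrix `P_{π_*}`. Subtracting the two gives the bound.
-/

namespace Matrix

variable {n : Type*} [Fintype n] [DecidableEq n] {M : Matrix n n ℝ} {γ : ℝ}

lemma le_mulVec_of_mem_rowStochastic (hM : M ∈ rowStochastic ℝ n) {c : ℝ} {w : n → ℝ}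
    (hw : ∀ k, c ≤ w k) (i : n) : c ≤ (M *ᵥ w) i :=
  calc c = ∑ k, M i k * c := by rw [← Finset.sum_mul, sum_row_of_mem_rowStochastic hM, one_mul]
    _ ≤ ∑ k, M i k * w k :=
      Finset.sum_le_sum fun k _ => mul_le_mul_of_nonneg_left (hw k) (nonneg_of_mem_rowStochastic hM)

/-- Minimum principle: at a minimum `j` of `w`, `w j ≥ γ (M w) j ≥ γ w j` forces `w j ≥ 0`. -/
lemma nonneg_of_nonneg_one_sub_smul_mulVec (hM : M ∈ rowStochastic ℝ n) (hγ0 : 0 ≤ γ)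
    (hγ1 : γ < 1) {w : n → ℝ} (hw : 0 ≤ (1 - γ • M) *ᵥ w) : 0 ≤ w := by
  intro i
  obtain ⟨j, -, hj⟩ := Finset.univ.exists_min_image w ⟨i, Finset.mem_univ i⟩
  have hmin : ∀ k, w j ≤ w k := fun k => hj k (Finset.mem_univ k)
  have hMw : w j ≤ (M *ᵥ w) j := le_mulVec_of_mem_rowStochastic hM hmin j
  have hwj : 0 ≤ w j - γ * (M *ᵥ w) j := by
    simpa [sub_mulVec, smul_mulVec] using hw j
  have : 0 ≤ w j := by nlinarith
  exact this.trans (hmin i)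

lemma isUnit_det_one_sub_smul (hM : M ∈ rowStochastic ℝ n) (hγ0 : 0 ≤ γ) (hγ1 : γ < 1) :
    IsUnit (1 - γ • M).det := by
  refine isUnit_iff_ne_zero.2 fun hdet => ?_
  obtain ⟨v, hv, hv0⟩ := exists_mulVec_eq_zero_iff.2 hdet
  have hpos : 0 ≤ v := nonneg_of_nonneg_one_sub_smul_mulVec hM hγ0 hγ1 (by rw [hv0])
  have hneg : 0 ≤ -v :=
    nonneg_of_nonneg_one_sub_smul_mulVec hM hγ0 hγ1 (by rw [mulVec_neg, hv0, neg_zero])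
  exact hv (le_antisymm (neg_nonneg.1 hneg) hpos)

lemma one_sub_smul_inv_mulVec_mono (hM : M ∈ rowStochastic ℝ n) (hγ0 : 0 ≤ γ) (hγ1 : γ < 1)
    {x y : n → ℝ} (hxy : x ≤ y) : (1 - γ • M)⁻¹ *ᵥ x ≤ (1 - γ • M)⁻¹ *ᵥ y := by
  have hunit := isUnit_det_one_sub_smul hM hγ0 hγ1
  rw [← sub_nonneg, ← mulVec_sub]
  refine nonneg_of_nonneg_one_sub_smul_mulVec hM hγ0 hγ1 ?_
  rwa [mulVec_mulVec, mul_nonsing_inv _ hunit, one_mulVec, sub_nonneg]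

end Matrix

namespace MoVIFormal

open Matrix

section

variable {S A : Type} [Fintype S] [Fintype A]

lemma Tpol_le_Topt {P : S × A → S → ℝ} (hP : IsKernel P) (r : S × A → ℝ) {γ : ℝ}
    (hγ : 0 ≤ γ) (π : S → A) (q : S × A → ℝ) : Tpol P r γ π q ≤ Topt P r γ q := by
  intro sa
  simp only [Tpol, Topt, Pop]
  gcongr with s'
  · exact hP.1 sa s'
  · exact le_ciSup (Set.finite_range fun a' => q (s', a')).bddAbove (π s')

variable [DecidableEq A]

lemma Pmat_mulVec (P : S × A → S → ℝ) (π : S → A) (q : S × A → ℝ) :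
    Pmat P π *ᵥ q = Pop P π q := by
  ext sa
  simp [mulVec, dotProduct, Pop, Fintype.sum_prod_type, Pmat]

lemma Tpol_sub_Tpol (P : S × A → S → ℝ) (r : S × A → ℝ) (γ : ℝ) (π : S → A)
    (q q' : S × A → ℝ) : Tpol P r γ π q - Tpol P r γ π q' = (γ • Pmat P π) *ᵥ (q - q') := by
  ext sa
  simp [Tpol, smul_mulVec, Pmat_mulVec, Pop, mul_sub, Finset.sum_sub_distrib]

variable [DecidableEq S]

lemma Pmat_mem_rowStochastic {P : S × A → S → ℝ} (hP : IsKernel P) (π : S → A) :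
    Pmat P π ∈ rowStochastic ℝ (S × A) := by
  refine mem_rowStochastic_iff_sum.2 ⟨fun sa sa' => ?_, fun sa => ?_⟩
  · unfold Pmat
    split
    · exact hP.1 sa sa'.1
    · exact le_rfl
  · simpa [Pmat, Fintype.sum_prod_type] using hP.2 sa

lemma sub_eq_Res_mulVec {P : S × A → S → ℝ} (hP : IsKernel P) (r : S × A → ℝ) {γ : ℝ}
    (hγ0 : 0 ≤ γ) (hγ1 : γ < 1) {π : S → A} {q : S × A → ℝ} (hq : Tpol P r γ π q = q)
    (h : S × A → ℝ) : q - h = Res P γ π *ᵥ (Tpol P r γ π h - h) := by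
  have hunit := isUnit_det_one_sub_smul (Pmat_mem_rowStochastic hP π) hγ0 hγ1
  have hfix : (1 - γ • Pmat P π) *ᵥ (q - h) = Tpol P r γ π h - h := by
    rw [sub_mulVec, one_mulVec, ← Tpol_sub_Tpol, hq]
    abel
  rw [Res, ← hfix, mulVec_mulVec, nonsing_inv_mul _ hunit, one_mulVec]

end

variable {S A : Type} [Fintype S] [Fintype A] [Nonempty S] [Nonempty A]
  [DecidableEq S] [DecidableEq A]

theorem greedy_decomposition_bound_general (P : S × A → S → ℝ) (hP : IsKernel P)
    (r : S × A → ℝ) (γ : ℝ) (hγ0 : 0 < γ) (hγ1 : γ < 1)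
    (qpi : (S → A) → S × A → ℝ)
    (hqpi : ∀ π' : S → A, Tpol P r γ π' (qpi π') = qpi π')
    (πstar : S → A)
    (h : S × A → ℝ) (π' : S → A) (hgreedy : Greedy P r γ π' h) :
    ∀ sa : S × A,
      qpi πstar sa - qpi π' sa ≤
        (Res P γ πstar).mulVec (fun sa' => Tpol P r γ π' h sa' - h sa') sa -
          (Res P γ π').mulVec (fun sa' => Tpol P r γ π' h sa' - h sa') sa := by
  have hstar : qpi πstar - h ≤ Res P γ πstar *ᵥ (Tpol P r γ π' h - h) := by
    rw [sub_eq_Res_mulVec hP r hγ0.le hγ1 (hqpi πstar) h]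
    refine one_sub_smul_inv_mulVec_mono (Pmat_mem_rowStochastic hP πstar) hγ0.le hγ1 ?_
    exact sub_le_sub_right (hgreedy ▸ Tpol_le_Topt hP r hγ0.le πstar h) h
  have heval : qpi π' - h = Res P γ π' *ᵥ (Tpol P r γ π' h - h) :=
    sub_eq_Res_mulVec hP r hγ0.le hγ1 (hqpi π') h
  intro sa
  calc qpi πstar sa - qpi π' sa = (qpi πstar - h) sa - (qpi π' - h) sa := by simp
    _ ≤ _ := by
      rw [heval]
      exact sub_le_sub_right (hstar sa) _

/-- Greedy decomposition bound. -/
theorem greedy_decomposition_bound (P : S × A → S → ℝ) (hP : IsKernel P)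
    (r : S × A → ℝ) (γ : ℝ) (hγ0 : 0 < γ) (hγ1 : γ < 1)
    (qpi : (S → A) → S × A → ℝ)
    (hqpi : ∀ π' : S → A, Tpol P r γ π' (qpi π') = qpi π')
    (πstar : S → A) (hopt : ∀ (π' : S → A) (sa : S × A), qpi π' sa ≤ qpi πstar sa)
    (h : S × A → ℝ) (π' : S → A) (hgreedy : Greedy P r γ π' h) :
    ∀ sa : S × A,
      qpi πstar sa - qpi π' sa ≤
        (Res P γ πstar).mulVec (fun sa' => Tpol P r γ π' h sa' - h sa') sa -
          (Res P γ π').mulVec (fun sa' => Tpol P r γ π' h sa' - h sa') sa :=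
  greedy_decomposition_bound_general P hP r γ hγ0 hγ1 qpi hqpi πstar h π' hgreedy

end MoVIFormal
end
end

section
/- Consecutive greedy policies improve on the MoVI iterates. For every j ≥ 1, the MoVI iterates satisfy, componentwise, T_{π_{j+1}} q_j − T_{π_j} q_j ≥ 0. (Indeed T_{π_{j+1}} q_j − T_{π_j} q_j = (j+1)(T_{π_{j+1}} h_j − T_{π_j} h_j) + j (T_{π_j} h_{j−1} − T_{π_{j+1}} h_{j−1}), and both terms are nonnegative since π_{j+1} ∈ 𝒢(h_j) and π_j ∈ 𝒢(h_{j−1}).) -/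
open Finset MeasureTheory
open scoped MeasureTheory

noncomputable section

namespace MoVIFormal

variable {S A : Type} [Fintype S]

lemma tpol_le_topt [Finite A] {P : S × A → S → ℝ} (hP : ∀ sa s', 0 ≤ P sa s') (r : S × A → ℝ)
    {γ : ℝ} (hγ : 0 ≤ γ) (π : S → A) (f : S × A → ℝ) :
    Tpol P r γ π f ≤ Topt P r γ f := fun sa => by
  unfold Tpol Topt Pop
  gcongr with s' _
  · exact hP sa s'
  · exact le_ciSup (Set.finite_range fun a' => f (s', a')).bddAbove (π s')

lemma pop_le_pop_of_greedy [Finite A] {P : S × A → S → ℝ} (hP : ∀ sa s', 0 ≤ P sa s')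
    {r : S × A → ℝ} {γ : ℝ} (hγ : 0 < γ) (π : S → A) {π' : S → A} {f : S × A → ℝ}
    (hg : Greedy P r γ π' f) : Pop P π f ≤ Pop P π' f := fun sa => by
  have hle := tpol_le_topt hP r hγ.le π f sa
  rw [← hg] at hle
  exact le_of_mul_le_mul_left (add_le_add_iff_left _ |>.mp hle) hγ

lemma pop_smul_sub_smul (P : S × A → S → ℝ) (π : S → A) (a b : ℝ) (f g : S × A → ℝ) :
    Pop P π (a • f - b • g) = a • Pop P π f - b • Pop P π g := by
  ext sa
  simp only [Pop, Pi.sub_apply, Pi.smul_apply, smul_eq_mul, mul_sum, ← sum_sub_distrib]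
  exact sum_congr rfl fun _ _ => by ring

lemma tpol_sub_tpol (P : S × A → S → ℝ) (r : S × A → ℝ) (γ : ℝ) (π π' : S → A)
    (f : S × A → ℝ) (sa : S × A) :
    Tpol P r γ π' f sa - Tpol P r γ π f sa = γ * (Pop P π' f sa - Pop P π f sa) := by
  simp only [Tpol]
  ring

lemma IsMoVI.q_succ_eq {P : S × A → S → ℝ} {r : S × A → ℝ} {γ : ℝ} {π : ℕ → S → A}
    {q h ε : ℕ → S × A → ℝ} (hmovi : IsMoVI P r γ π q h ε) (k : ℕ) :
    q (k + 1) = ((k : ℝ) + 2) • h (k + 1) - ((k : ℝ) + 1) • h k := by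
  ext sa
  rw [hmovi.2.2.2 k]
  simp only [Pi.sub_apply, Pi.smul_apply, smul_eq_mul]
  field_simp
  ring

end MoVIFormal

namespace MoVIFormal

variable {S A : Type} [Fintype S] [Fintype A] [Nonempty S] [Nonempty A]
  [DecidableEq S] [DecidableEq A]

theorem movi_consecutive_greedy_improvement_general (P : S × A → S → ℝ) (hP : IsKernel P)
    (r : S × A → ℝ) (γ : ℝ) (hγ0 : 0 < γ)
    (π : ℕ → S → A) (q h : ℕ → S × A → ℝ) (ε : ℕ → S × A → ℝ)
    (hmovi : IsMoVI P r γ π q h ε) (j : ℕ) (hj : 1 ≤ j) :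
    ∀ sa : S × A, 0 ≤ Tpol P r γ (π (j + 1)) (q j) sa - Tpol P r γ (π j) (q j) sa := by
  intro sa
  obtain ⟨k, rfl⟩ : ∃ k, j = k + 1 := ⟨j - 1, by omega⟩
  have improve_new := pop_le_pop_of_greedy hP.1 hγ0 (π (k + 1)) (hmovi.2.1 (k + 1)) sa
  have improve_old := pop_le_pop_of_greedy hP.1 hγ0 (π (k + 1 + 1)) (hmovi.2.1 k) sa
  rw [tpol_sub_tpol, hmovi.q_succ_eq, pop_smul_sub_smul, pop_smul_sub_smul]
  simp only [Pi.sub_apply, Pi.smul_apply, smul_eq_mul]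
  refine mul_nonneg hγ0.le ?_
  have := mul_le_mul_of_nonneg_left improve_new (by positivity : (0 : ℝ) ≤ k + 2)
  have := mul_le_mul_of_nonneg_left improve_old (by positivity : (0 : ℝ) ≤ k + 1)
  linarith

/-- Consecutive greedy policies improve on the MoVI iterates. -/
theorem movi_consecutive_greedy_improvement (P : S × A → S → ℝ) (hP : IsKernel P)
    (r : S × A → ℝ) (γ : ℝ) (hγ0 : 0 < γ) (hγ1 : γ < 1)
    (π : ℕ → S → A) (q h : ℕ → S × A → ℝ) (ε : ℕ → S × A → ℝ)
    (hmovi : IsMoVI P r γ π q h ε) (j : ℕ) (hj : 1 ≤ j) :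
    ∀ sa : S × A, 0 ≤ Tpol P r γ (π (j + 1)) (q j) sa - Tpol P r γ (π j) (q j) sa :=
  movi_consecutive_greedy_improvement_general P hP r γ hγ0 π q h ε hmovi j hj

end MoVIFormal
end
end

section
/- Recursion on the MoVI averaged values (Lemma A.2). For every k ≥ 2, the MoVI iterates satisfy the exact identity (k+1) h_k = k h_{k−1} + T_{π_k}[k h_{k−1}] − γ P_{π_k}[(k−1) h_{k−2}] + ε_k, where T_{π}[v] denotes r + γ P_π v. -/
/-!
Since `h k` is the running average of `q 0, …, q k`, one has
`q (k + 1) = (k + 2) h (k + 1) - (k + 1) h k`. Substituting this for `q (k - 1)` in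
`q k = T_{π k} (q (k - 1)) + ε k` and using the linearity of `P_π` gives the recursion.
-/

open Finset MeasureTheory
open scoped MeasureTheory

noncomputable section

namespace MoVIFormal

variable {S A : Type} [Fintype S] [Fintype A] [Nonempty S] [Nonempty A]
  [DecidableEq S] [DecidableEq A]

section

omit [Fintype A] [Nonempty S] [Nonempty A] [DecidableEq S] [DecidableEq A]

theorem Pop_sub (P : S × A → S → ℝ) (π : S → A) (q q' : S × A → ℝ) :
    Pop P π (q - q') = Pop P π q - Pop P π q' := by
  funext sa
  simp only [Pop, Pi.sub_apply, mul_sub, Finset.sum_sub_distrib]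

namespace IsMoVI

variable {P : S × A → S → ℝ} {r : S × A → ℝ} {γ : ℝ} {π : ℕ → S → A}
  {q h ε : ℕ → S × A → ℝ}

theorem mul_h_succ (hmovi : IsMoVI P r γ π q h ε) (k : ℕ) (sa : S × A) :
    ((k : ℝ) + 2) * h (k + 1) sa = ((k : ℝ) + 1) * h k sa + q (k + 1) sa := by
  rw [hmovi.2.2.2 k]
  field_simp

theorem q_succ_eq_s15 (hmovi : IsMoVI P r γ π q h ε) (k : ℕ) :
    q (k + 1) = (fun sa => ((k : ℝ) + 2) * h (k + 1) sa) - fun sa => ((k : ℝ) + 1) * h k sa := by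
  funext sa
  simp only [Pi.sub_apply, hmovi.mul_h_succ k sa, add_sub_cancel_left]

/-- The recursion in the shifted index `k = m + 2`, where no truncated subtraction occurs. -/
theorem averaged_recursion (hmovi : IsMoVI P r γ π q h ε) (m : ℕ) (sa : S × A) :
    ((m : ℝ) + 3) * h (m + 2) sa =
      ((m : ℝ) + 2) * h (m + 1) sa +
          Tpol P r γ (π (m + 2)) (fun sa' => ((m : ℝ) + 2) * h (m + 1) sa') sa -
        γ * Pop P (π (m + 2)) (fun sa' => ((m : ℝ) + 1) * h m sa') sa + ε (m + 2) sa := by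
  have hq : q (m + 2) sa = Tpol P r γ (π (m + 2)) (q (m + 1)) sa + ε (m + 2) sa :=
    congrFun (hmovi.2.2.1 (m + 1)) sa
  rw [hmovi.q_succ_eq_s15 m] at hq
  simp only [Tpol, Pop_sub, Pi.sub_apply] at hq ⊢
  have hh := hmovi.mul_h_succ (m + 1) sa
  push_cast at hh
  linarith

end IsMoVI

end

theorem movi_averaged_recursion_general (P : S × A → S → ℝ)
    (r : S × A → ℝ) (γ : ℝ)
    (π : ℕ → S → A) (q h : ℕ → S × A → ℝ) (ε : ℕ → S × A → ℝ)
    (hmovi : IsMoVI P r γ π q h ε) (k : ℕ) (hk : 2 ≤ k) :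
    ∀ sa : S × A,
      (k + 1 : ℝ) * h k sa =
        (k : ℝ) * h (k - 1) sa +
            Tpol P r γ (π k) (fun sa' => (k : ℝ) * h (k - 1) sa') sa -
          γ * Pop P (π k) (fun sa' => ((k - 1 : ℕ) : ℝ) * h (k - 2) sa') sa + ε k sa := by
  obtain ⟨m, rfl⟩ := Nat.exists_eq_add_of_le' hk
  intro sa
  convert hmovi.averaged_recursion m sa using 2 <;> push_cast <;> ring_nf

/-- Lemma A.2: recursion on the MoVI averaged values. -/
theorem movi_averaged_recursion (P : S × A → S → ℝ) (hP : IsKernel P)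
    (r : S × A → ℝ) (γ : ℝ) (hγ0 : 0 < γ) (hγ1 : γ < 1)
    (π : ℕ → S → A) (q h : ℕ → S × A → ℝ) (ε : ℕ → S × A → ℝ)
    (hmovi : IsMoVI P r γ π q h ε) (k : ℕ) (hk : 2 ≤ k) :
    ∀ sa : S × A,
      (k + 1 : ℝ) * h k sa =
        (k : ℝ) * h (k - 1) sa +
            Tpol P r γ (π k) (fun sa' => (k : ℝ) * h (k - 1) sa') sa -
          γ * Pop P (π k) (fun sa' => ((k - 1 : ℕ) : ℝ) * h (k - 2) sa') sa + ε k sa :=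
  movi_averaged_recursion_general P r γ π q h ε hmovi k hk

end MoVIFormal
end
end
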